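/- arXiv:1903.11246 — 3 statements merged into one kernel-verified Lean document; each statement's English description precedes it below -/
import Mathlib

section
/- Let G be a graph whose state vertices form an undirected path v_1 — v_2 — ⋯ — v_n, with each state vertex having a self-loop, and with a single input vertex u attached by an edge to the terminal vertex v_n. Then G satisfies the dedicated-node condition: for every nonempty subset α of the state vertices with α ⊊ N(α), there exists a vertex j ∈ N(α)\α and exactly one vertex i ∈ α such that the edge (i,j) is present. -/
/-!
Let `v_m` be the state vertex of `α` with the largest index. Its successor along the path
(`v_{m+1}`, or the input vertex `u` when `m = n`) lies outside `α`, and among the state vertices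
of index `≤ m` only `v_m` is adjacent to it; hence it is a dedicated node of `v_m`.
-/

def nbhd {V : Type*} (Adj : V → V → Prop) (α : Set V) : Set V :=
  {j | ∃ i ∈ α, Adj i j}

/-- Adjacency of a path graph on state vertices `Fin n` (with self-loops and
consecutive edges) together with one input vertex `Sum.inr ()` attached to the
terminal state vertex `v_n` (index `n-1`). -/
def pathAdj (n : ℕ) : (Fin n ⊕ Unit) → (Fin n ⊕ Unit) → Prop
  | .inl i, .inl j => i = j ∨ (i : ℕ) + 1 = (j : ℕ) ∨ (j : ℕ) + 1 = (i : ℕ)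
  | .inl i, .inr _ => (i : ℕ) + 1 = n
  | .inr _, .inl j => (j : ℕ) + 1 = n
  | .inr _, .inr _ => False

lemma exists_inl_mem_forall_le {ι κ : Type*} [Finite ι] [LinearOrder ι] {α : Set (ι ⊕ κ)}
    (hα : ∀ v ∈ α, ∃ i, v = .inl i) (hne : α.Nonempty) :
    ∃ m, Sum.inl m ∈ α ∧ ∀ k, Sum.inl k ∈ α → k ≤ m := by
  obtain ⟨v, hv⟩ := hne
  obtain ⟨i, rfl⟩ := hα v hv
  exact Set.exists_max_image (Sum.inl ⁻¹' α) id (Set.toFinite _) ⟨i, hv⟩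

namespace pathAdj

variable {n : ℕ}

def succVertex (i : Fin n) : Fin n ⊕ Unit :=
  if h : (i : ℕ) + 1 < n then .inl ⟨i + 1, h⟩ else .inr ()

lemma adj_succVertex (i : Fin n) : pathAdj n (.inl i) (succVertex i) := by
  unfold succVertex
  split_ifs with h
  · exact Or.inr (Or.inl rfl)
  · show (i : ℕ) + 1 = n
    omega

lemma succVertex_ne_inl {i k : Fin n} (hk : k ≤ i) : succVertex i ≠ .inl k := by
  unfold succVertex
  split_ifs
  · simp only [ne_eq, Sum.inl.injEq, Fin.ext_iff]
    exact fun h => by rw [Fin.le_def] at hk; omega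
  · exact Sum.inr_ne_inl

lemma eq_of_adj_succVertex {i k : Fin n} (hk : k ≤ i)
    (hadj : pathAdj n (.inl k) (succVertex i)) : k = i := by
  rw [Fin.le_def] at hk
  unfold succVertex at hadj
  split_ifs at hadj
  · rcases hadj with h | h | h
    · exact absurd (congrArg Fin.val h) (by simp only; omega)
    · exact Fin.ext (by simp only at h; omega)
    · simp only at h; omega
  · exact Fin.ext (by change (k : ℕ) + 1 = n at hadj; omega)

end pathAdj

open pathAdj in
theorem stmt_1_general (n : ℕ) :
    ∀ α ⊆ {v : Fin n ⊕ Unit | ∃ i : Fin n, v = .inl i}, α.Nonempty →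
      α ⊂ nbhd (pathAdj n) α →
      ∃ j ∈ nbhd (pathAdj n) α \ α, ∃! i, i ∈ α ∧ pathAdj n i j := by
  intro α hsub hne _
  obtain ⟨m, hm, hmax⟩ := exists_inl_mem_forall_le (fun v hv => hsub hv) hne
  refine ⟨succVertex m, ⟨⟨_, hm, adj_succVertex m⟩, fun hs => ?_⟩, _, ⟨hm, adj_succVertex m⟩, ?_⟩
  · obtain ⟨k, hk⟩ := hsub hs
    exact succVertex_ne_inl (hmax k (hk ▸ hs)) hk
  · rintro v ⟨hv, hadj⟩
    obtain ⟨k, rfl⟩ := hsub hv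
    rw [eq_of_adj_succVertex (hmax k hv) hadj]

theorem stmt_1 (n : ℕ) (hn : 0 < n) :
    ∀ α ⊆ {v : Fin n ⊕ Unit | ∃ i : Fin n, v = .inl i}, α.Nonempty →
      α ⊂ nbhd (pathAdj n) α →
      ∃ j ∈ nbhd (pathAdj n) α \ α, ∃! i, i ∈ α ∧ pathAdj n i j :=
  stmt_1_general n
end

section
/- Let L be the n×n tridiagonal matrix of the negative Laplacian of a path graph with all edge weights positive: L has off-diagonal entries L_{k,k+1} = L_{k+1,k} = a_k > 0 and diagonal entries making row sums zero (L_{11} = −a_1, L_{nn} = −a_{n−1}, L_{kk} = −a_{k−1} − a_k for 1 < k < n). Let b ∈ ℝ^n be the vector with b_n = c ≠ 0 and all other entries 0. Then the pair (L, b) is controllable, i.e., the Kalman controllability matrix [b, Lb, L²b, …, L^{n−1}b] has rank n. -/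
/-!
Since `L` has no entries above its superdiagonal, `Lᵏ e_n` lies in the span of
`e_{n-k}, …, e_n`, and its `e_{n-k}`-coordinate is `c · a_{n-k} ⋯ a_{n-1} ≠ 0`. Listing the rows
of the Kalman matrix in reverse order therefore gives an upper triangular matrix with nonzero
diagonal.
-/

/-- Negative Laplacian of the undirected path on `n+1` vertices with edge
weights `a k` between vertices `k` and `k+1`; rows sum to zero. -/
def pathLap (n : ℕ) (a : Fin n → ℝ) : Matrix (Fin (n + 1)) (Fin (n + 1)) ℝ :=
  Matrix.of fun i j =>
    if h : (i : ℕ) + 1 = (j : ℕ) then a ⟨i, by have := j.isLt; omega⟩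
    else if h' : (j : ℕ) + 1 = (i : ℕ) then a ⟨j, by have := i.isLt; omega⟩
    else if i = j then
      -((if hi : (i : ℕ) < n then a ⟨i, hi⟩ else 0) +
        (if hi : 0 < (i : ℕ) then a ⟨(i : ℕ) - 1, by have := i.isLt; omega⟩ else 0))
    else 0

/-- Kalman controllability matrix `[b, Lb, L²b, …, Lⁿb]` for the pair `(L, b)`. -/
def kalman (n : ℕ) (L : Matrix (Fin (n + 1)) (Fin (n + 1)) ℝ)
    (b : Fin (n + 1) → ℝ) : Matrix (Fin (n + 1)) (Fin (n + 1)) ℝ :=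
  Matrix.of fun i k => (L ^ (k : ℕ)).mulVec b i

open Matrix

section Hessenberg

variable {R : Type*} [Semiring R] {n : ℕ} {L : Matrix (Fin (n + 1)) (Fin (n + 1)) R}

theorem pow_mulVec_single_last_eq_zero (hL : ∀ i j : Fin (n + 1), (i : ℕ) + 1 < j → L i j = 0)
    (c : R) (k : ℕ) (i : Fin (n + 1)) (hi : (i : ℕ) + k < n) :
    (L ^ k *ᵥ Pi.single (Fin.last n) c) i = 0 := by
  induction k generalizing i with
  | zero =>
    rw [pow_zero, one_mulVec, Pi.single_apply, if_neg (by rw [Fin.ext_iff, Fin.val_last]; omega)]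
  | succ k ih =>
    rw [pow_succ', ← mulVec_mulVec, mulVec, dotProduct]
    refine Finset.sum_eq_zero fun j _ => ?_
    rcases le_or_gt (j : ℕ) (i + 1) with hj | hj
    · rw [ih j (by omega), mul_zero]
    · rw [hL i j hj, zero_mul]

theorem pow_mulVec_single_last_ne_zero [NoZeroDivisors R]
    (hL : ∀ i j : Fin (n + 1), (i : ℕ) + 1 < j → L i j = 0)
    (hsup : ∀ i j : Fin (n + 1), (i : ℕ) + 1 = j → L i j ≠ 0)
    {c : R} (hc : c ≠ 0) (k : ℕ) (i : Fin (n + 1)) (hi : (i : ℕ) + k = n) :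
    (L ^ k *ᵥ Pi.single (Fin.last n) c) i ≠ 0 := by
  induction k generalizing i with
  | zero =>
    rwa [pow_zero, one_mulVec, Pi.single_apply, if_pos (by rw [Fin.ext_iff, Fin.val_last]; omega)]
  | succ k ih =>
    let j : Fin (n + 1) := ⟨i + 1, by omega⟩
    have hij : (i : ℕ) + 1 = j := rfl
    rw [pow_succ', ← mulVec_mulVec, mulVec, dotProduct, Finset.sum_eq_single j]
    · exact mul_ne_zero (hsup i j hij) (ih j (by omega))
    · intro j' _ hj'
      rcases lt_trichotomy (j' : ℕ) j with h | h | h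
      · rw [pow_mulVec_single_last_eq_zero hL c k j' (by omega), mul_zero]
      · exact absurd (Fin.ext h) hj'
      · rw [hL i j' (by omega), zero_mul]
    · simp

end Hessenberg

theorem kalman_rank_of_hessenberg {n : ℕ} {L : Matrix (Fin (n + 1)) (Fin (n + 1)) ℝ}
    (hL : ∀ i j : Fin (n + 1), (i : ℕ) + 1 < j → L i j = 0)
    (hsup : ∀ i j : Fin (n + 1), (i : ℕ) + 1 = j → L i j ≠ 0) {c : ℝ} (hc : c ≠ 0) :
    (kalman n L (Pi.single (Fin.last n) c)).rank = n + 1 := by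
  set N := (kalman n L (Pi.single (Fin.last n) c)).submatrix Fin.rev id
  have hupper : N.IsUpperTriangular := fun i k (hki : k < i) =>
    pow_mulVec_single_last_eq_zero hL c k (Fin.rev i) (by rw [Fin.val_rev]; omega)
  have hdiag : ∀ i, N i i ≠ 0 := fun i =>
    pow_mulVec_single_last_ne_zero hL hsup hc i (Fin.rev i) (by rw [Fin.val_rev]; omega)
  have hunit : IsUnit N := by
    rw [isUnit_iff_isUnit_det, det_of_isUpperTriangular hupper, isUnit_iff_ne_zero]
    exact Finset.prod_ne_zero_iff.mpr fun i _ => hdiag i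
  rw [← rank_submatrix _ Fin.revPerm (Equiv.refl _)]
  exact (rank_of_isUnit N hunit).trans (Fintype.card_fin _)

theorem pathLap_eq_zero_of_succ_lt {n : ℕ} (a : Fin n → ℝ) {i j : Fin (n + 1)}
    (h : (i : ℕ) + 1 < j) : pathLap n a i j = 0 := by
  rw [pathLap, of_apply, dif_neg (by omega), dif_neg (by omega),
    if_neg (by rintro rfl; omega)]

theorem pathLap_of_succ_eq {n : ℕ} (a : Fin n → ℝ) {i j : Fin (n + 1)} (h : (i : ℕ) + 1 = j) :
    pathLap n a i j = a ⟨i, by have := j.isLt; omega⟩ := by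
  rw [pathLap, of_apply, dif_pos h]

theorem stmt_12 (n : ℕ) (a : Fin n → ℝ) (ha : ∀ k, 0 < a k) (c : ℝ) (hc : c ≠ 0) :
    (kalman n (pathLap n a) (fun i => if (i : ℕ) = n then c else 0)).rank = n + 1 := by
  have hb : (fun i : Fin (n + 1) => if (i : ℕ) = n then c else 0) = Pi.single (Fin.last n) c := by
    ext i
    simp [Pi.single_apply, Fin.ext_iff]
  rw [hb]
  exact kalman_rank_of_hessenberg (fun i j => pathLap_eq_zero_of_succ_lt a)
    (fun i j h => pathLap_of_succ_eq a h ▸ (ha _).ne') hc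
end

section
/- Let G₁ and G₂ be two vertex-disjoint path graphs, each with state vertices having self-loops and having an input vertex attached to one terminal state vertex, and therefore each satisfying the dedicated-node condition. If G is formed from the disjoint union of G₁ and G₂ by adding one undirected edge between a state vertex of G₁ and a state vertex of G₂, then G satisfies the dedicated-node condition on the union of the state vertex sets. -/
def dedCond {V : Type*} (Adj : V → V → Prop) (S : Set V) : Prop :=
  ∀ α ⊆ S, α.Nonempty → α ⊂ nbhd Adj α →
    ∃ j ∈ nbhd Adj α \ α, ∃! i, i ∈ α ∧ Adj i j

/-- Two disjoint path graphs joined by one undirected edge between state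
vertex `i0` of the first and state vertex `j0` of the second. -/
def twoPathsAdj (n m : ℕ) (i0 : Fin n) (j0 : Fin m) :
    ((Fin n ⊕ Unit) ⊕ (Fin m ⊕ Unit)) → ((Fin n ⊕ Unit) ⊕ (Fin m ⊕ Unit)) → Prop
  | .inl a, .inl b => pathAdj n a b
  | .inr a, .inr b => pathAdj m a b
  | .inl a, .inr b => a = .inl i0 ∧ b = .inl j0
  | .inr a, .inl b => a = .inl j0 ∧ b = .inl i0

variable {V W : Type*}

def HasDedicatedNode (Adj : V → V → Prop) (α : Set V) : Prop :=
  ∃ j ∈ nbhd Adj α \ α, ∃! i, i ∈ α ∧ Adj i j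

theorem hasDedicatedNode_of_forall_eq {Adj : V → V → Prop} {α : Set V} {i j : V}
    (hj : j ∉ α) (hi : i ∈ α) (hij : Adj i j) (huniq : ∀ x ∈ α, Adj x j → x = i) :
    HasDedicatedNode Adj α :=
  ⟨j, ⟨⟨i, hi, hij⟩, hj⟩, i, ⟨hi, hij⟩, fun x hx => huniq x hx.1 hx.2⟩

theorem HasDedicatedNode.of_preimage {Adj : V → V → Prop} {Adj' : W → W → Prop}
    {α : Set V} (e : W ≃ V) (he : ∀ x y, Adj' x y ↔ Adj (e x) (e y))
    (h : HasDedicatedNode Adj' (e ⁻¹' α)) : HasDedicatedNode Adj α := by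
  obtain ⟨j, ⟨-, hj⟩, i, ⟨hi, hij⟩, huniq⟩ := h
  refine hasDedicatedNode_of_forall_eq hj hi ((he i j).1 hij) fun x hx hxj => ?_
  rw [← e.apply_symm_apply x, huniq (e.symm x) ⟨by simpa, by simpa [he]⟩]

theorem exists_forall_eq_of_pathAdj {n : ℕ} {α : Set (Fin n ⊕ Unit)} {k : Fin n}
    (hin : .inr () ∉ α) (hmax : ∀ i, .inl i ∈ α → i ≤ k) :
    ∃ w ∉ α, pathAdj n (.inl k) w ∧ ∀ x ∈ α, pathAdj n x w → x = .inl k := by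
  by_cases hlt : (k : ℕ) + 1 < n
  · refine ⟨.inl ⟨k + 1, hlt⟩, fun h => ?_, by simp [pathAdj], ?_⟩
    · simpa [Fin.le_def] using hmax _ h
    · rintro (i | ⟨⟩) hx hadj
      · have := Fin.le_def.1 (hmax i hx)
        simp only [pathAdj, Fin.ext_iff] at hadj
        exact congrArg Sum.inl (Fin.ext (by omega))
      · exact absurd hx hin
  · refine ⟨.inr (), hin, by simp only [pathAdj]; omega, ?_⟩
    rintro (i | ⟨⟩) hx hadj
    · simp only [pathAdj] at hadj
      exact congrArg Sum.inl (Fin.ext (by omega))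
    · exact absurd hx hin

section TwoPaths

variable {n m : ℕ} {i0 : Fin n} {j0 : Fin m} {α : Set ((Fin n ⊕ Unit) ⊕ (Fin m ⊕ Unit))}

theorem twoPathsAdj_swap (x y : (Fin n ⊕ Unit) ⊕ (Fin m ⊕ Unit)) :
    twoPathsAdj m n j0 i0 x.swap y.swap ↔ twoPathsAdj n m i0 j0 x y := by
  rcases x with x | x <;> rcases y with y | y <;> rfl

theorem hasDedicatedNode_twoPathsAdj_of_left (hL : ∃ i, .inl (.inl i) ∈ α)
    (hin : .inl (.inr ()) ∉ α) (hcross : .inr (.inl j0) ∈ α → .inl (.inl i0) ∈ α) :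
    HasDedicatedNode (twoPathsAdj n m i0 j0) α := by
  obtain ⟨k, hk, hmax⟩ :=
    Set.exists_max_image {i : Fin n | Sum.inl (Sum.inl i) ∈ α} id (Set.toFinite _) hL
  obtain ⟨w, hw, hkw, huniq⟩ :=
    exists_forall_eq_of_pathAdj (α := Sum.inl ⁻¹' α) hin hmax
  refine hasDedicatedNode_of_forall_eq (j := .inl w) hw hk hkw ?_
  rintro (x | x) hx hxw
  · exact congrArg Sum.inl (huniq x hx hxw)
  · obtain ⟨rfl, rfl⟩ : x = .inl j0 ∧ w = .inl i0 := hxw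
    exact (hw (hcross hx)).elim

theorem hasDedicatedNode_twoPathsAdj_of_right (hR : ∃ j, .inr (.inl j) ∈ α)
    (hin : .inr (.inr ()) ∉ α) (hcross : .inl (.inl i0) ∈ α → .inr (.inl j0) ∈ α) :
    HasDedicatedNode (twoPathsAdj n m i0 j0) α :=
  HasDedicatedNode.of_preimage (Equiv.sumComm _ _) (fun x y => (twoPathsAdj_swap x y).symm)
    (hasDedicatedNode_twoPathsAdj_of_left hR hin hcross)

end TwoPaths

theorem stmt_14 (n m : ℕ) (i0 : Fin n) (j0 : Fin m) :
    dedCond (twoPathsAdj n m i0 j0)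
      ((Sum.inl '' {v | ∃ i : Fin n, v = .inl i}) ∪
       (Sum.inr '' {v | ∃ j : Fin m, v = .inl j})) := by
  intro α hαS hne _
  have hinL : .inl (.inr ()) ∉ α := fun h => by simpa using hαS h
  have hinR : .inr (.inr ()) ∉ α := fun h => by simpa using hαS h
  by_cases hi0 : .inl (.inl i0) ∈ α
  · exact hasDedicatedNode_twoPathsAdj_of_left ⟨i0, hi0⟩ hinL fun _ => hi0
  by_cases hR : ∃ j, .inr (.inl j) ∈ α
  · exact hasDedicatedNode_twoPathsAdj_of_right hR hinR fun h => absurd h hi0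
  obtain ⟨x, hx⟩ := hne
  rcases hαS hx with ⟨_, ⟨i, rfl⟩, rfl⟩ | ⟨_, ⟨j, rfl⟩, rfl⟩
  · exact hasDedicatedNode_twoPathsAdj_of_left ⟨i, hx⟩ hinL fun hj => absurd ⟨j0, hj⟩ hR
  · exact absurd ⟨j, hx⟩ hR
end
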